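/- Define T_N = ∏→_{λ ∈ Λ_N} E(Z_{a,b} Z_{a+1,b+1} ··· Z_{a+c−b−1,c−1}) where Λ_N = {(a,b,c) : 1 ≤ a < b < c ≤ N+1} is ordered lexicographically and the Z's are generators of the quantum torus T_N of the quiver Q_N. Then T_N = μ2(T_N), where μ2 is the anti-automorphism μ2(Z_{ij}) = Z_{N+1−j,N+1−i}; moreover this equality can be established purely by permuting mutually commuting quantum-exponential factors. -/

import Mathlib

/-- Coefficients of the quantum exponential series
`E(x) = ∑ (-x)^n / ((1-q)⋯(1-q^n))` with `q = RatFunc.X`. -/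
noncomputable def qcoef (n : ℕ) : RatFunc ℚ :=
  (-1 : RatFunc ℚ) ^ n / ∏ k ∈ Finset.range n, (1 - (RatFunc.X : RatFunc ℚ) ^ (k + 1))

/-- The quantum exponential of an element of a topological algebra over `ℚ(q)`. -/
noncomputable def qexp {A : Type*} [Ring A] [Algebra (RatFunc ℚ) A] [TopologicalSpace A]
    (x : A) : A :=
  ∑' n : ℕ, qcoef n • x ^ n

/-- Entry `B_{v,w}` of the skew-symmetric incidence matrix of the triangular quiver
`Q_N`: edges go `(i,j)→(i,j+1)`, `(i,j)→(i+1,j)` and `(i+1,j+1)→(i,j)`. -/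
def Bfun (v w : ℕ × ℕ) : ℤ :=
  if (w = (v.1, v.2 + 1) ∨ w = (v.1 + 1, v.2) ∨ v = (w.1 + 1, w.2 + 1)) then 1
  else if (v = (w.1, w.2 + 1) ∨ v = (w.1 + 1, w.2) ∨ w = (v.1 + 1, v.2 + 1)) then -1
  else 0

/-- The vertex set of the quiver `Q_N`: pairs `(i,j)` with `1 ≤ i < j ≤ N`. -/
def vertexSet (N : ℕ) : Finset (ℕ × ℕ) :=
  (Finset.Icc 1 N ×ˢ Finset.Icc 1 N).filter fun p => p.1 < p.2

/-- The list of triples `(a,b,c)` with `1 ≤ a < b < c ≤ M`, in lexicographic order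
(the set `Λ_N` with `M = N + 1`). -/
def tripleList (M : ℕ) : List (ℕ × ℕ × ℕ) :=
  (((List.range (M + 1)).flatMap fun a =>
      (List.range (M + 1)).flatMap fun b =>
        (List.range (M + 1)).map fun c => (a, b, c)).filter
    fun t => decide (1 ≤ t.1 ∧ t.1 < t.2.1 ∧ t.2.1 < t.2.2 ∧ t.2.2 ≤ M))

/-- The element `T_N`: the lexicographically ordered product over
`Λ_N = {(a,b,c) : 1 ≤ a < b < c ≤ N+1}` of
`E(Z_{a,b} Z_{a+1,b+1} ⋯ Z_{a+c-b-1,c-1})`. -/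
noncomputable def Tel {A : Type*} [Ring A] [Algebra (RatFunc ℚ) A] [TopologicalSpace A]
    (N : ℕ) (Z : ℕ × ℕ → A) : A :=
  ((tripleList (N + 1)).map fun t =>
    qexp (((List.range (t.2.2 - t.2.1)).map fun k => Z (t.1 + k, t.2.1 + k)).prod)).prod

/-!
`μ₂` reverses the order of the factors of `T_N` and sends the factor of `λ = (a, b, c)` to the
factor of `σ λ = (N + 2 - c, N + 2 + b - a - c, N + 2 - a)`, where `σ` is an involution of `Λ_N`.
Hence `μ₂(T_N)` is the product of the same factors, ordered by the reverse of the `σ`-image of the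
lexicographic order. Two factors change places exactly when `λ < λ'` and `σ λ < σ λ'`; for such a
pair the monomials commute, because for each vertex `w` of the diagonal of `λ'` the exponent
`∑ B(v, w)` over the diagonal of `λ` counts, with signs, the six neighbours of `w` on that
diagonal, and the two inequalities force them to cancel in pairs. Commuting nilpotent elements have
commuting quantum exponentials, so the two products agree.
-/

section AntiMultiplicative

variable {M : Type*} [Monoid M] {μ : M → M} (hμone : μ 1 = 1)
  (hμmul : ∀ x y : M, μ (x * y) = μ y * μ x)

def antiMonoidHom : M →* Mᵐᵒᵖ where
  toFun x := MulOpposite.op (μ x)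
  map_one' := by rw [hμone, MulOpposite.op_one]
  map_mul' x y := by rw [hμmul, MulOpposite.op_mul]

include hμone hμmul

lemma antiMul_pow (x : M) (n : ℕ) : μ (x ^ n) = μ x ^ n :=
  congrArg MulOpposite.unop (map_pow (antiMonoidHom hμone hμmul) x n)

lemma antiMul_list_prod (l : List M) : μ l.prod = (l.map μ).reverse.prod :=
  unop_map_list_prod (antiMonoidHom hμone hμmul) l

end AntiMultiplicative

section QCommute

variable {R A : Type*} [CommSemiring R] [Semiring A] [Algebra R A] {c : R} {x y : A}

lemma mul_pow_of_qcomm (h : y * x = c • (x * y)) (n : ℕ) :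
    y * x ^ n = c ^ n • (x ^ n * y) := by
  induction n with
  | zero => simp
  | succ n ih =>
    rw [pow_succ, ← mul_assoc, ih, smul_mul_assoc, mul_assoc, h, mul_smul_comm, smul_smul,
      pow_succ, mul_assoc]

lemma exists_mul_pow_of_qcomm (h : y * x = c • (x * y)) (n : ℕ) :
    ∃ d : R, (x * y) ^ n = d • (x ^ n * y ^ n) := by
  induction n with
  | zero => exact ⟨1, by simp⟩
  | succ n ih =>
    obtain ⟨d, hd⟩ := ih
    refine ⟨d * c ^ n, ?_⟩
    rw [pow_succ', hd, mul_smul_comm, mul_assoc x, ← mul_assoc y, mul_pow_of_qcomm h n,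
      smul_mul_assoc, mul_assoc, ← pow_succ' y, mul_smul_comm, smul_smul, ← mul_assoc,
      ← pow_succ']

lemma IsNilpotent.mul_of_qcomm (hx : IsNilpotent x) (h : y * x = c • (x * y)) :
    IsNilpotent (x * y) := by
  obtain ⟨m, hm⟩ := hx
  obtain ⟨d, hd⟩ := exists_mul_pow_of_qcomm h m
  exact ⟨m, by rw [hd, hm, zero_mul, smul_zero]⟩

end QCommute

section QuantumExponential

variable {A : Type*} [Ring A] [Algebra (RatFunc ℚ) A] [TopologicalSpace A]

lemma qexp_eq_sum_range {x : A} {m : ℕ} (hx : x ^ m = 0) :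
    qexp x = ∑ n ∈ Finset.range m, qcoef n • x ^ n :=
  tsum_eq_sum fun n hn => by
    rw [pow_eq_zero_of_le (by simpa using hn) hx, smul_zero]

lemma qexp_commute {x y : A} (hx : IsNilpotent x) (hy : IsNilpotent y) (h : Commute x y) :
    Commute (qexp x) (qexp y) := by
  obtain ⟨m, hm⟩ := hx
  obtain ⟨m', hm'⟩ := hy
  rw [qexp_eq_sum_range hm, qexp_eq_sum_range hm']
  exact Commute.sum_left _ _ _ fun i _ => Commute.sum_right _ _ _ fun j _ =>
    ((h.pow_pow i j).smul_left _).smul_right _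

lemma map_qexp_of_antiMul (μ : A →ₗ[RatFunc ℚ] A) (hμone : μ 1 = 1)
    (hμmul : ∀ x y : A, μ (x * y) = μ y * μ x) {x : A} (hx : IsNilpotent x) :
    μ (qexp x) = qexp (μ x) := by
  obtain ⟨m, hm⟩ := hx
  have hμx : μ x ^ m = 0 := by rw [← antiMul_pow hμone hμmul, hm, map_zero]
  rw [qexp_eq_sum_range hm, qexp_eq_sum_range hμx, map_sum]
  exact Finset.sum_congr rfl fun n _ => by rw [map_smul, antiMul_pow hμone hμmul]

end QuantumExponential

section QuantumTorus

variable {K A ι : Type*} [Field K] [Ring A] [Algebra K A] {q : K} {B : ι → ι → ℤ} {Z : ι → A}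
  {S : Set ι} (hq : q ≠ 0) (hrel : ∀ v ∈ S, ∀ w ∈ S, Z v * Z w = q ^ B v w • (Z w * Z v))
include hq hrel

lemma list_prod_mul_of_qcomm {w : ι} (hw : w ∈ S) {l : List ι} (hl : ∀ v ∈ l, v ∈ S) :
    (l.map Z).prod * Z w = q ^ (l.map fun v => B v w).sum • (Z w * (l.map Z).prod) := by
  induction l with
  | nil => simp
  | cons v l ih =>
    rw [List.forall_mem_cons] at hl
    rw [List.map_cons, List.prod_cons, mul_assoc, ih hl.2, mul_smul_comm, ← mul_assoc,
      hrel v hl.1 w hw, smul_mul_assoc, smul_smul, List.map_cons, List.sum_cons, zpow_add₀ hq,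
      mul_comm (q ^ B v w), mul_assoc]

lemma isNilpotent_list_prod {l : List ι} (hl : l ≠ []) (hS : ∀ v ∈ l, v ∈ S)
    (hnil : ∀ v ∈ S, IsNilpotent (Z v)) : IsNilpotent (l.map Z).prod := by
  obtain ⟨v, l, rfl⟩ := List.exists_cons_of_ne_nil hl
  rw [List.forall_mem_cons] at hS
  rw [List.map_cons, List.prod_cons]
  exact (hnil v hS.1).mul_of_qcomm (list_prod_mul_of_qcomm hq hrel hS.1 hS.2)

lemma commute_list_prod {l l' : List ι} (hS : ∀ v ∈ l, v ∈ S) (hS' : ∀ w ∈ l', w ∈ S)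
    (hB : ∀ w ∈ l', (l.map fun v => B v w).sum = 0) : Commute (l.map Z).prod (l'.map Z).prod :=
  Commute.list_prod_right _ _ fun z hz => by
    obtain ⟨w, hw, rfl⟩ := List.mem_map.mp hz
    have := list_prod_mul_of_qcomm hq hrel (hS' w hw) hS
    rwa [hB w hw, zpow_zero, one_smul] at this

end QuantumTorus

theorem List.Perm.prod_map_eq_of_inversions_commute {α M : Type*} [Monoid M] (f : α → M)
    {r r' : α → α → Prop} {l₁ l₂ : List α} (hp : l₁.Perm l₂) (h₁ : l₁.Pairwise r)
    (h₂ : l₂.Pairwise r') (hirr : ∀ x, ¬ r' x x)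
    (hc : ∀ x ∈ l₁, ∀ y ∈ l₁, r x y → r' y x → Commute (f x) (f y)) :
    (l₁.map f).prod = (l₂.map f).prod := by
  induction l₁ generalizing l₂ with
  | nil => rw [hp.symm.eq_nil]
  | cons a t ih =>
    obtain ⟨u, v, rfl⟩ := List.append_of_mem (hp.subset List.mem_cons_self)
    have hpt : t.Perm (u ++ v) := (List.perm_cons a).mp (hp.trans List.perm_middle)
    have hu : ∀ x ∈ u, r' x a := fun x hx =>
      (List.pairwise_append.mp h₂).2.2 x hx a List.mem_cons_self
    have hut : ∀ x ∈ u, x ∈ t := fun x hx =>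
      (List.mem_cons.mp (hp.symm.subset (by simp [hx]))).resolve_left
        (by rintro rfl; exact hirr x (hu x hx))
    have hcomm : Commute (f a) (u.map f).prod :=
      Commute.list_prod_right _ _ fun z hz => by
        obtain ⟨x, hx, rfl⟩ := List.mem_map.mp hz
        exact hc a List.mem_cons_self x (List.mem_cons_of_mem _ (hut x hx))
          (List.rel_of_pairwise_cons h₁ (hut x hx)) (hu x hx)
    have ih' : (t.map f).prod = ((u ++ v).map f).prod :=
      ih hpt h₁.of_cons (h₂.sublist ((List.sublist_cons_self a v).append_left u))
        fun x hx y hy => hc x (List.mem_cons_of_mem _ hx) y (List.mem_cons_of_mem _ hy)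
    simp only [List.map_cons, List.prod_cons, List.map_append, List.prod_append] at ih' ⊢
    rw [ih', ← mul_assoc, hcomm.eq, mul_assoc]

namespace TriangularQuiver

def diagonal (t : ℕ × ℕ × ℕ) : List (ℕ × ℕ) :=
  (List.range (t.2.2 - t.2.1)).map fun k => (t.1 + k, t.2.1 + k)

lemma mem_diagonal {t : ℕ × ℕ × ℕ} {v : ℕ × ℕ} :
    v ∈ diagonal t ↔ t.1 ≤ v.1 ∧ v.1 + t.2.1 = v.2 + t.1 ∧ v.2 < t.2.2 := by
  obtain ⟨a, b, c⟩ := t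
  obtain ⟨i, j⟩ := v
  simp only [diagonal, List.mem_map, List.mem_range, Prod.mk.injEq]
  constructor
  · rintro ⟨k, hk, rfl, rfl⟩
    omega
  · rintro ⟨h₁, h₂, h₃⟩
    exact ⟨i - a, by omega, by omega, by omega⟩

lemma nodup_diagonal (t : ℕ × ℕ × ℕ) : (diagonal t).Nodup :=
  List.nodup_range.map fun k l h => by simpa using congrArg Prod.fst h

lemma Bfun_eq_neighbours (v : ℕ × ℕ) {w : ℕ × ℕ} (hw₁ : 1 ≤ w.1) (hw₂ : 1 ≤ w.2) :
    Bfun v w =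
      (if v = (w.1, w.2 - 1) then 1 else 0) + (if v = (w.1 - 1, w.2) then 1 else 0)
        + (if v = (w.1 + 1, w.2 + 1) then 1 else 0) - (if v = (w.1, w.2 + 1) then 1 else 0)
        - (if v = (w.1 + 1, w.2) then 1 else 0) - (if v = (w.1 - 1, w.2 - 1) then 1 else 0) := by
  obtain ⟨a, b⟩ := v
  obtain ⟨i, j⟩ := w
  simp only [Bfun, Prod.mk.injEq] at *
  split_ifs <;> omega

abbrev lexLt : ℕ × ℕ × ℕ → ℕ × ℕ × ℕ → Prop := Prod.Lex (· < ·) (Prod.Lex (· < ·) (· < ·))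

lemma mem_vertexSet {N : ℕ} {v : ℕ × ℕ} :
    v ∈ vertexSet N ↔ 1 ≤ v.1 ∧ v.1 < v.2 ∧ v.2 ≤ N := by
  simp only [vertexSet, Finset.mem_filter, Finset.mem_product, Finset.mem_Icc]
  omega

lemma mem_tripleList {M : ℕ} {t : ℕ × ℕ × ℕ} :
    t ∈ tripleList M ↔ 1 ≤ t.1 ∧ t.1 < t.2.1 ∧ t.2.1 < t.2.2 ∧ t.2.2 ≤ M := by
  obtain ⟨a, b, c⟩ := t
  simp only [tripleList, List.mem_filter, List.mem_flatMap, List.mem_map, List.mem_range,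
    decide_eq_true_eq, Prod.mk.injEq]
  exact ⟨fun h => h.2, fun h => ⟨⟨a, by omega, b, by omega, c, by omega, rfl, rfl, rfl⟩, h⟩⟩

lemma pairwise_lexLt_tripleList (M : ℕ) : (tripleList M).Pairwise lexLt := by
  refine List.Pairwise.filter _ (List.pairwise_flatMap.mpr ⟨fun a _ => ?_, ?_⟩)
  · refine List.pairwise_flatMap.mpr ⟨fun b _ => ?_, ?_⟩
    · exact List.pairwise_map.mpr (List.pairwise_lt_range.imp fun h =>
        .right _ (.right _ h))
    · refine List.pairwise_lt_range.imp fun hb x hx y hy => ?_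
      obtain ⟨c, -, rfl⟩ := List.mem_map.mp hx
      obtain ⟨c', -, rfl⟩ := List.mem_map.mp hy
      exact .right _ (.left _ _ hb)
  · refine List.pairwise_lt_range.imp fun ha x hx y hy => ?_
    simp only [List.mem_flatMap, List.mem_map] at hx hy
    obtain ⟨b, -, c, -, rfl⟩ := hx
    obtain ⟨b', -, c', -, rfl⟩ := hy
    exact .left _ _ ha

/-- For `M = N + 1`, `μ₂` maps the monomial of `t` to that of `reflect M t`
(`reverse_map_diagonal`). -/
def reflect (M : ℕ) (t : ℕ × ℕ × ℕ) : ℕ × ℕ × ℕ :=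
  (M + 1 - t.2.2, M + 1 + t.2.1 - t.1 - t.2.2, M + 1 - t.1)

lemma reflect_mem_tripleList {M : ℕ} {t : ℕ × ℕ × ℕ} (ht : t ∈ tripleList M) :
    reflect M t ∈ tripleList M := by
  rw [mem_tripleList] at ht ⊢
  simp only [reflect]
  omega

lemma reflect_reflect {M : ℕ} {t : ℕ × ℕ × ℕ} (ht : t ∈ tripleList M) :
    reflect M (reflect M t) = t := by
  rw [mem_tripleList] at ht
  simp only [reflect, Prod.ext_iff]
  omega

lemma reverse_map_diagonal {M : ℕ} {t : ℕ × ℕ × ℕ} (ht : t ∈ tripleList M) :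
    ((diagonal t).map fun v => (M - v.2, M - v.1)).reverse = diagonal (reflect M t) := by
  rw [mem_tripleList] at ht
  refine List.ext_getElem (by simp [diagonal, reflect]; omega) fun k h₁ h₂ => ?_
  simp only [diagonal, List.getElem_reverse, List.getElem_map, List.getElem_range,
    List.length_reverse, List.length_map, List.length_range, reflect, Prod.ext_iff] at h₁ ⊢
  omega

lemma perm_reverse_map_reflect (M : ℕ) :
    (tripleList M).Perm ((tripleList M).reverse.map (reflect M)) := by
  have hnodup : ((tripleList M).reverse.map (reflect M)).Nodup :=
    (List.nodup_reverse.mpr ((pairwise_lexLt_tripleList M).imp fun h => ne_of_irrefl h)).map_on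
      fun x hx y hy hxy => by
        rw [← reflect_reflect (List.mem_reverse.mp hx), hxy,
          reflect_reflect (List.mem_reverse.mp hy)]
  have hsub : (tripleList M).reverse.map (reflect M) ⊆ tripleList M := fun x hx => by
    obtain ⟨y, hy, rfl⟩ := List.mem_map.mp hx
    exact reflect_mem_tripleList (List.mem_reverse.mp hy)
  exact ((hnodup.subperm hsub).perm_of_length_le (by simp)).symm

lemma pairwise_reverse_map_reflect (M : ℕ) :
    ((tripleList M).reverse.map (reflect M)).Pairwise
      fun t u => lexLt (reflect M u) (reflect M t) := by
  rw [List.pairwise_map, List.pairwise_reverse]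
  exact (pairwise_lexLt_tripleList M).imp_of_mem fun hx hy h => by
    rwa [reflect_reflect hx, reflect_reflect hy]

lemma sum_Bfun_diagonal_eq_zero {M : ℕ} {t u : ℕ × ℕ × ℕ} (ht : t ∈ tripleList M)
    (hu : u ∈ tripleList M) (hlex : lexLt t u) (hlex' : lexLt (reflect M t) (reflect M u))
    {w : ℕ × ℕ} (hw : w ∈ diagonal u) :
    ((diagonal t).map fun v => Bfun v w).sum = 0 := by
  classical
  rw [mem_diagonal] at hw
  rw [mem_tripleList] at ht hu
  simp only [Prod.lex_def, reflect] at hlex hlex'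
  rw [← List.sum_toFinset _ (nodup_diagonal t)]
  rw [Finset.sum_congr rfl fun v _ => Bfun_eq_neighbours v (by omega) (by omega)]
  simp only [Finset.sum_sub_distrib, Finset.sum_add_distrib, Finset.sum_ite_eq', List.mem_toFinset,
    mem_diagonal]
  split_ifs <;> omega

lemma diagonal_subset_vertexSet {N : ℕ} {t : ℕ × ℕ × ℕ} (ht : t ∈ tripleList (N + 1)) :
    ∀ v ∈ diagonal t, v ∈ vertexSet N := fun v hv => by
  rw [mem_tripleList] at ht
  rw [mem_diagonal] at hv
  rw [mem_vertexSet]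
  omega

section Factors

variable {A : Type*} [Ring A] [Algebra (RatFunc ℚ) A] {N : ℕ} {Z : ℕ × ℕ → A}

lemma isNilpotent_diagonal_prod
    (hrel : ∀ v ∈ vertexSet N, ∀ w ∈ vertexSet N,
      Z v * Z w = ((RatFunc.X : RatFunc ℚ) ^ (Bfun v w)) • (Z w * Z v))
    (hnil : ∀ v ∈ vertexSet N, IsNilpotent (Z v)) {t : ℕ × ℕ × ℕ} (ht : t ∈ tripleList (N + 1)) :
    IsNilpotent ((diagonal t).map Z).prod := by
  refine isNilpotent_list_prod RatFunc.X_ne_zero hrel ?_ (diagonal_subset_vertexSet ht) hnil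
  rw [mem_tripleList] at ht
  simp only [diagonal, ne_eq, List.map_eq_nil_iff, List.range_eq_nil]
  omega

variable [TopologicalSpace A]

noncomputable def factor (Z : ℕ × ℕ → A) (t : ℕ × ℕ × ℕ) : A :=
  qexp ((diagonal t).map Z).prod

lemma Tel_eq_prod_factor : Tel N Z = ((tripleList (N + 1)).map (factor Z)).prod := by
  rw [Tel]
  congr 2
  funext t
  rw [factor, diagonal, List.map_map]
  rfl

variable (hrel : ∀ v ∈ vertexSet N, ∀ w ∈ vertexSet N,
    Z v * Z w = ((RatFunc.X : RatFunc ℚ) ^ (Bfun v w)) • (Z w * Z v))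
  (hnil : ∀ v ∈ vertexSet N, IsNilpotent (Z v))
include hrel hnil

lemma commute_factor {t u : ℕ × ℕ × ℕ} (ht : t ∈ tripleList (N + 1))
    (hu : u ∈ tripleList (N + 1)) (hlex : lexLt t u)
    (hlex' : lexLt (reflect (N + 1) t) (reflect (N + 1) u)) :
    Commute (factor Z t) (factor Z u) :=
  qexp_commute (isNilpotent_diagonal_prod hrel hnil ht) (isNilpotent_diagonal_prod hrel hnil hu)
    (commute_list_prod RatFunc.X_ne_zero hrel (diagonal_subset_vertexSet ht)
      (diagonal_subset_vertexSet hu) fun _ hw => sum_Bfun_diagonal_eq_zero ht hu hlex hlex' hw)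

lemma map_factor (μ : A →ₗ[RatFunc ℚ] A) (hμone : μ 1 = 1)
    (hμmul : ∀ x y : A, μ (x * y) = μ y * μ x)
    (hμZ : ∀ i j : ℕ, 1 ≤ i → i < j → j ≤ N → μ (Z (i, j)) = Z (N + 1 - j, N + 1 - i))
    {t : ℕ × ℕ × ℕ} (ht : t ∈ tripleList (N + 1)) :
    μ (factor Z t) = factor Z (reflect (N + 1) t) := by
  have hμdiag : ((diagonal t).map Z).map μ =
      ((diagonal t).map fun v => (N + 1 - v.2, N + 1 - v.1)).map Z := by
    rw [List.map_map, List.map_map]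
    refine List.map_congr_left fun v hv => ?_
    have hv := mem_vertexSet.mp (diagonal_subset_vertexSet ht v hv)
    exact hμZ v.1 v.2 hv.1 hv.2.1 hv.2.2
  rw [factor, factor, map_qexp_of_antiMul μ hμone hμmul (isNilpotent_diagonal_prod hrel hnil ht),
    antiMul_list_prod hμone hμmul, hμdiag, ← List.map_reverse, reverse_map_diagonal ht]

end Factors

end TriangularQuiver

open TriangularQuiver in
theorem Tel_mu2_invariant_general {A : Type*} [Ring A] [Algebra (RatFunc ℚ) A]
    [TopologicalSpace A] (N : ℕ) (Z : ℕ × ℕ → A)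
    (hrel : ∀ v ∈ vertexSet N, ∀ w ∈ vertexSet N,
      Z v * Z w = ((RatFunc.X : RatFunc ℚ) ^ (Bfun v w)) • (Z w * Z v))
    (hnil : ∀ v ∈ vertexSet N, IsNilpotent (Z v))
    (μ : A →ₗ[RatFunc ℚ] A) (hμone : μ 1 = 1)
    (hμmul : ∀ x y : A, μ (x * y) = μ y * μ x)
    (hμZ : ∀ i j : ℕ, 1 ≤ i → i < j → j ≤ N →
      μ (Z (i, j)) = Z (N + 1 - j, N + 1 - i)) :
    μ (Tel N Z) = Tel N Z := by
  have hμT : μ (Tel N Z) =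
      (((tripleList (N + 1)).reverse.map (reflect (N + 1))).map (factor Z)).prod := by
    rw [Tel_eq_prod_factor, antiMul_list_prod hμone hμmul, List.map_map, ← List.map_reverse,
      List.map_map]
    exact congrArg List.prod (List.map_congr_left fun t ht =>
      map_factor hrel hnil μ hμone hμmul hμZ (List.mem_reverse.mp ht))
  rw [hμT, Tel_eq_prod_factor]
  exact ((perm_reverse_map_reflect (N + 1)).prod_map_eq_of_inversions_commute (factor Z)
    (pairwise_lexLt_tripleList _) (pairwise_reverse_map_reflect _) (fun _ => irrefl _)
    fun t ht u hu hlex hlex' => commute_factor hrel hnil ht hu hlex hlex').symm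

/-- `T_N = μ₂(T_N)` where `μ₂` is the anti-automorphism with
`μ₂(Z_{ij}) = Z_{N+1-j,N+1-i}` (the generators `Z_{ij}` of the quantum torus of `Q_N`
being realized by nilpotent `q`-commuting elements of a topological algebra). -/
theorem Tel_mu2_invariant {A : Type*} [Ring A] [Algebra (RatFunc ℚ) A]
    [TopologicalSpace A] [T2Space A] (N : ℕ) (hN : 2 ≤ N) (Z : ℕ × ℕ → A)
    (hrel : ∀ v ∈ vertexSet N, ∀ w ∈ vertexSet N,
      Z v * Z w = ((RatFunc.X : RatFunc ℚ) ^ (Bfun v w)) • (Z w * Z v))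
    (hnil : ∀ v ∈ vertexSet N, IsNilpotent (Z v))
    (μ : A →ₗ[RatFunc ℚ] A) (hμone : μ 1 = 1)
    (hμmul : ∀ x y : A, μ (x * y) = μ y * μ x)
    (hμZ : ∀ i j : ℕ, 1 ≤ i → i < j → j ≤ N →
      μ (Z (i, j)) = Z (N + 1 - j, N + 1 - i)) :
    μ (Tel N Z) = Tel N Z :=
  Tel_mu2_invariant_general N Z hrel hnil μ hμone hμmul hμZ
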